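/- arXiv:1904.09253 — 3 statements merged into one kernel-verified Lean document; each statement's English description precedes it below -/
import Mathlib

section
/- The critical length of the operator D³ + D (kernel spanned by 1, cos x, sin x) equals 2π, and the critical length of the operator D⁴ + D² (kernel spanned by 1, x, cos x, sin x) also equals 2π. Equivalently: for 0 < h < 2π every nonzero F(x) = a + b·x + c·cos x + d·sin x vanishes at most 3 times in [0,h] counting multiplicities up to 4, and this fails for h = 2π; similarly with the three-dimensional space {a + c·cos x + d·sin x} and at most 2 zeros counting multiplicities up to 3. -/
open scoped BigOperators

noncomputable section

/-- `F` vanishes to order at least `m` at `x`: all derivatives of order `< m` vanish at `x`. -/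
def VanishAtLeast (F : ℝ → ℝ) (m : ℕ) (x : ℝ) : Prop :=
  ∀ j < m, iteratedDeriv j F x = 0

/-- `F` vanishes at most `N` times in `J`, counting multiplicities up to `μ`. -/
def VanishAtMost (F : ℝ → ℝ) (μ N : ℕ) (J : Set ℝ) : Prop :=
  ∀ (r : ℕ) (xs : Fin r → ℝ) (m : Fin r → ℕ),
    (∀ i, xs i ∈ J) → Function.Injective xs →
    (∀ i, 1 ≤ m i) → (∀ i, m i ≤ μ) →
    (∀ i, VanishAtLeast F (m i) (xs i)) →
    ∑ i, m i ≤ N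

/-- Kernel of the operator `L = D^(n+1) + ∑_{i=0}^n a i • D^i`. -/
def kerOp (n : ℕ) (a : Fin (n + 1) → ℝ) : Set (ℝ → ℝ) :=
  {F | ContDiff ℝ (⊤ : ℕ∞) F ∧
    ∀ x : ℝ, iteratedDeriv (n + 1) F x + ∑ i : Fin (n + 1), a i * iteratedDeriv (i : ℕ) F x = 0}

/-- The (restriction of the) kernel of `L` is an Extended Chebyshev space on `J`. -/
def IsECOn (n : ℕ) (a : Fin (n + 1) → ℝ) (J : Set ℝ) : Prop :=
  ∀ F ∈ kerOp n a, F ≠ 0 → VanishAtMost F (n + 1) n J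

/-- Critical length of the operator `L = D^(n+1) + ∑ a i • D^i`, as an extended real. -/
def critLen (n : ℕ) (a : Fin (n + 1) → ℝ) : EReal :=
  sSup {l : EReal | ∃ h : ℝ, l = (h : EReal) ∧ 0 < h ∧ IsECOn n a (Set.Icc 0 h)}

/-! The kernels consist of the functions `a + b x + c cos x + d sin x` (with `b = 0` for `D³ + D`):
an energy argument shows that `g'' = -g` forces `g = g 0 cos + g' 0 sin`.

For `a + T` with `T = c cos + d sin`, the identity
`T x - T y = 2 sin ((x - y) / 2) T' ((x + y) / 2)` turns two zeros at distance less than `2π` into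
a zero of `T' = d cos - c sin` at their midpoint. Hence any zero configuration of total multiplicity
three in a window shorter than `2π` yields either a common zero of `T` and `T'`, or two zeros of
`T'` whose difference is not a multiple of `π`; both force `c = d = 0`. The space with `b x` is
handled by Rolle's theorem, as its derivatives lie in the space without it. The critical length is
attained by `1 - cos x`, which has double zeros at `0` and `2π`. -/

open Real Set

def trigAffine (a b c d : ℝ) : ℝ → ℝ := fun x => a + b * x + c * cos x + d * sin x

theorem hasDerivAt_trigAffine (a b c d x : ℝ) :
    HasDerivAt (trigAffine a b c d) (trigAffine b 0 d (-c) x) x :=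
  ((((hasDerivAt_const x a).add ((hasDerivAt_id x).const_mul b)).add
      ((hasDerivAt_cos x).const_mul c)).add ((hasDerivAt_sin x).const_mul d)).congr_deriv
    (by simp only [trigAffine]; ring)

theorem deriv_trigAffine (a b c d : ℝ) : deriv (trigAffine a b c d) = trigAffine b 0 d (-c) :=
  funext fun x => (hasDerivAt_trigAffine a b c d x).deriv

theorem differentiable_trigAffine (a b c d : ℝ) : Differentiable ℝ (trigAffine a b c d) :=
  fun x => (hasDerivAt_trigAffine a b c d x).differentiableAt

theorem contDiff_trigAffine (a b c d : ℝ) {n : WithTop ℕ∞} :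
    ContDiff ℝ n (trigAffine a b c d) := by
  unfold trigAffine
  fun_prop

theorem trigAffine_eq_zero_iff {a b c d : ℝ} :
    trigAffine a b c d = 0 ↔ a = 0 ∧ b = 0 ∧ c = 0 ∧ d = 0 := by
  refine ⟨fun h => ?_, by rintro ⟨rfl, rfl, rfl, rfl⟩; funext x; simp [trigAffine]⟩
  have h0 := congrFun h 0
  have hpi := congrFun h π
  have h2pi := congrFun h (2 * π)
  have hhalf := congrFun h (π / 2)
  simp only [trigAffine, Pi.zero_apply, cos_zero, sin_zero, cos_pi, sin_pi, cos_two_pi,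
    sin_two_pi, cos_pi_div_two, sin_pi_div_two] at h0 hpi h2pi hhalf
  have hb : b = 0 := by
    have : b * (2 * π) = 0 := by linarith
    exact (mul_eq_zero.1 this).resolve_right (by positivity)
  subst hb
  refine ⟨by linarith, rfl, by linarith, by linarith⟩

theorem one_sub_cos_ne_zero : trigAffine 1 0 (-1) 0 ≠ 0 :=
  fun h => one_ne_zero (trigAffine_eq_zero_iff.1 h).1

theorem eq_zero_of_harmonic {p q : ℝ → ℝ} (hp : ∀ x, HasDerivAt p (q x) x)
    (hq : ∀ x, HasDerivAt q (-p x) x) (hp0 : p 0 = 0) (hq0 : q 0 = 0) : p = 0 := by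
  have henergy : ∀ x, HasDerivAt (fun y => p y ^ 2 + q y ^ 2) 0 x := fun x =>
    (((hp x).pow 2).add ((hq x).pow 2)).congr_deriv (by ring)
  funext x
  have hx := is_const_of_deriv_eq_zero (fun y => (henergy y).differentiableAt)
    (fun y => (henergy y).deriv) x 0
  simp only [hp0, hq0] at hx
  exact pow_eq_zero_iff two_ne_zero |>.1 (by nlinarith [sq_nonneg (p x), sq_nonneg (q x)])

theorem eq_trigAffine_of_deriv_deriv_eq_neg {g : ℝ → ℝ} (hg : Differentiable ℝ g)
    (hg' : Differentiable ℝ (deriv g)) (hode : ∀ x, deriv (deriv g) x = -g x) :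
    g = trigAffine 0 0 (g 0) (deriv g 0) := by
  refine sub_eq_zero.1 <| eq_zero_of_harmonic
    (q := deriv g - trigAffine 0 0 (deriv g 0) (-g 0))
    (fun x => by simpa using (hg x).hasDerivAt.sub (hasDerivAt_trigAffine 0 0 _ _ x))
    (fun x => ((hg' x).hasDerivAt.sub (hasDerivAt_trigAffine 0 0 _ _ x)).congr_deriv
      (by simp only [hode, trigAffine, Pi.sub_apply]; ring))
    (by simp [trigAffine]) (by simp [trigAffine])

theorem exists_eq_trigAffine_of_deriv_eq {F : ℝ → ℝ} {b c d : ℝ} (hF : Differentiable ℝ F)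
    (h : deriv F = trigAffine b 0 d (-c)) : ∃ a, F = trigAffine a b c d := by
  have hconst : ∀ x, HasDerivAt (fun y => F y - trigAffine 0 b c d y) 0 x := fun x =>
    ((hF x).hasDerivAt.sub (hasDerivAt_trigAffine 0 b c d x)).congr_deriv (by rw [h, sub_self])
  refine ⟨F 0 - c, funext fun x => ?_⟩
  have hx := is_const_of_deriv_eq_zero (fun y => (hconst y).differentiableAt)
    (fun y => (hconst y).deriv) x 0
  simp only [trigAffine] at hx ⊢
  simp only [mul_zero, add_zero, cos_zero, mul_one, sin_zero, zero_add] at hx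
  linarith

theorem exists_iteratedDeriv_eq_trigAffine {F : ℝ → ℝ} {k : ℕ}
    (hF : ContDiff ℝ (k + 2 : ℕ) F)
    (hode : ∀ x, iteratedDeriv (k + 2) F x + iteratedDeriv k F x = 0) :
    ∃ c d, iteratedDeriv k F = trigAffine 0 0 c d := by
  have hderiv : deriv (iteratedDeriv k F) = iteratedDeriv (k + 1) F :=
    (iteratedDeriv_succ ..).symm
  refine ⟨_, _, eq_trigAffine_of_deriv_deriv_eq_neg
    (hF.differentiable_iteratedDeriv k (by norm_cast; omega)) ?_ fun x => ?_⟩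
  · exact hderiv ▸ hF.differentiable_iteratedDeriv (k + 1) (by norm_cast; omega)
  · rw [hderiv, ← iteratedDeriv_succ]
    linarith [hode x]

theorem mem_kerOp_two_iff {F : ℝ → ℝ} :
    F ∈ kerOp 2 ![0, 1, 0] ↔ ∃ a c d, F = trigAffine a 0 c d := by
  refine ⟨fun ⟨hF, hode⟩ => ?_, ?_⟩
  · obtain ⟨c, d, hcd⟩ := exists_iteratedDeriv_eq_trigAffine (k := 1) (contDiff_infty.1 hF _)
      fun x => by simpa [Fin.sum_univ_three] using hode x
    rw [iteratedDeriv_one] at hcd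
    obtain ⟨a, rfl⟩ := exists_eq_trigAffine_of_deriv_eq (c := -d)
      (hF.differentiable (by simp)) (by rw [hcd, neg_neg])
    exact ⟨a, -d, c, rfl⟩
  · rintro ⟨a, c, d, rfl⟩
    refine ⟨contDiff_trigAffine .., fun x => ?_⟩
    simp [Fin.sum_univ_three, iteratedDeriv_succ, deriv_trigAffine, trigAffine]
    ring

theorem mem_kerOp_three_iff {F : ℝ → ℝ} :
    F ∈ kerOp 3 ![0, 0, 1, 0] ↔ ∃ a b c d, F = trigAffine a b c d := by
  refine ⟨fun ⟨hF, hode⟩ => ?_, ?_⟩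
  · obtain ⟨c, d, hcd⟩ := exists_iteratedDeriv_eq_trigAffine (k := 2) (contDiff_infty.1 hF _)
      fun x => by simpa [Fin.sum_univ_four] using hode x
    rw [iteratedDeriv_succ, iteratedDeriv_one] at hcd
    obtain ⟨b, hb⟩ := exists_eq_trigAffine_of_deriv_eq (c := -d)
      (by simpa using hF.differentiable_iteratedDeriv 1 (by simp)) (by rw [hcd, neg_neg])
    obtain ⟨a, rfl⟩ := exists_eq_trigAffine_of_deriv_eq (c := -c)
      (hF.differentiable (by simp)) (by rw [hb, neg_neg])
    exact ⟨a, b, -c, -d, rfl⟩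
  · rintro ⟨a, b, c, d, rfl⟩
    refine ⟨contDiff_trigAffine .., fun x => ?_⟩
    simp [Fin.sum_univ_four, iteratedDeriv_succ, deriv_trigAffine, trigAffine]
    ring

theorem VanishAtLeast.apply_eq_zero {F : ℝ → ℝ} {m : ℕ} {x : ℝ} (h : VanishAtLeast F m x)
    (hm : 1 ≤ m) : F x = 0 := by
  simpa using h 0 hm

theorem VanishAtLeast.deriv {F : ℝ → ℝ} {m : ℕ} {x : ℝ} (h : VanishAtLeast F m x) :
    VanishAtLeast (deriv F) (m - 1) x := fun j hj => by
  rw [← iteratedDeriv_succ']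
  exact h (j + 1) (by omega)

theorem vanishAtMost_of_forall_ne {F : ℝ → ℝ} {μ N : ℕ} {J : Set ℝ}
    (h : ∀ x ∈ J, F x ≠ 0) : VanishAtMost F μ N J := by
  rintro (_ | r) xs m hmem - h1 - hv
  · simp
  · exact absurd ((hv 0).apply_eq_zero (h1 0)) (h _ (hmem 0))

theorem VanishAtMost.sum_le {F : ℝ → ℝ} {μ N : ℕ} {J : Set ℝ} (h : VanishAtMost F μ N J)
    {ι : Type*} [Fintype ι] (xs : ι → ℝ) (m : ι → ℕ) (hmem : ∀ i, xs i ∈ J)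
    (hinj : Function.Injective xs) (h1 : ∀ i, 1 ≤ m i) (hμ : ∀ i, m i ≤ μ)
    (hv : ∀ i, VanishAtLeast F (m i) (xs i)) : ∑ i, m i ≤ N := by
  let e := (Fintype.equivFin ι).symm
  rw [← e.sum_comp]
  exact h _ (xs ∘ e) (m ∘ e) (fun i => hmem _) (hinj.comp e.injective) (fun i => h1 _)
    (fun i => hμ _) (fun i => hv _)

theorem vanishAtMost_of_strictMono {F : ℝ → ℝ} {μ N : ℕ} {J : Set ℝ}
    (H : ∀ (r : ℕ) (xs : Fin r → ℝ) (m : Fin r → ℕ), StrictMono xs →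
      (∀ i, xs i ∈ J) → (∀ i, 1 ≤ m i) → (∀ i, m i ≤ μ) →
      (∀ i, VanishAtLeast F (m i) (xs i)) → ∑ i, m i ≤ N) :
    VanishAtMost F μ N J := by
  intro r xs m hmem hinj h1 hμ hv
  let σ := Tuple.sort xs
  rw [← Equiv.sum_comp σ]
  exact H r (xs ∘ σ) (m ∘ σ)
    ((Tuple.monotone_sort xs).strictMono_of_injective (hinj.comp σ.injective))
    (fun i => hmem _) (fun i => h1 _) (fun i => hμ _) (fun i => hv _)

theorem StrictMono.interlace {r : ℕ} {xs : Fin (r + 1) → ℝ} {y : Fin r → ℝ}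
    (hxs : StrictMono xs) (hy : ∀ k, y k ∈ Ioo (xs k.castSucc) (xs k.succ)) :
    StrictMono y ∧ ∀ i k, xs i ≠ y k := by
  refine ⟨fun k l hkl => ?_, fun i k hik => ?_⟩
  · calc y k < xs k.succ := (hy k).2
      _ ≤ xs l.castSucc := hxs.monotone (Fin.succ_le_castSucc_iff.2 hkl)
      _ < y l := (hy l).1
  · have h1 : k.castSucc < i := hxs.lt_iff_lt.1 (hik ▸ (hy k).1)
    have h2 : i < k.succ := hxs.lt_iff_lt.1 (hik ▸ (hy k).2)
    exact absurd h2 (not_lt.2 (Fin.castSucc_lt_iff_succ_le.1 h1))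

theorem sum_eq_sum_subtype_sub_one_add_card {ι : Type*} [Fintype ι] (m : ι → ℕ)
    (h1 : ∀ i, 1 ≤ m i) :
    ∑ i, m i = ∑ i : {i // 2 ≤ m i}, (m i - 1) + Fintype.card ι := by
  calc ∑ i, m i = ∑ i, ((m i - 1) + 1) := Finset.sum_congr rfl fun i _ => by have := h1 i; omega
    _ = ∑ i, (m i - 1) + Fintype.card ι := by simp [Finset.sum_add_distrib]
    _ = _ := by
      rw [← Finset.sum_subtype (p := (2 ≤ m ·)) _ (fun _ => Finset.mem_filter_univ _)
          (m · - 1), Finset.sum_filter_of_ne fun i _ hi => by omega]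

/-- Rolle's theorem, counting multiplicities: between consecutive zeros of `F` lies a zero of
`F'`, and a zero of `F` of order `m` is one of `F'` of order `m - 1`. -/
theorem VanishAtMost.of_deriv {F : ℝ → ℝ} {μ N : ℕ} {J : Set ℝ}
    (hF : Differentiable ℝ F) (hJ : J.OrdConnected) (h : VanishAtMost (deriv F) (μ + 1) N J) :
    VanishAtMost F (μ + 2) (N + 1) J := by
  refine vanishAtMost_of_strictMono fun r xs m hxs hmem h1 hμ hv => ?_
  rcases r with _ | r
  · simp
  have hrolle (k : Fin r) : ∃ y ∈ Ioo (xs k.castSucc) (xs k.succ), deriv F y = 0 :=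
    exists_deriv_eq_zero (hxs k.castSucc_lt_succ) hF.continuous.continuousOn
      (by rw [(hv _).apply_eq_zero (h1 _), (hv _).apply_eq_zero (h1 _)])
  choose y hy hy0 using hrolle
  obtain ⟨hy_mono, hxy⟩ := hxs.interlace hy
  have hsum := h.sum_le (ι := {i // 2 ≤ m i} ⊕ Fin r) (Sum.elim (xs ·) y)
    (Sum.elim (m · - 1) 1)
    (Sum.rec (fun i => hmem i) fun k => hJ.out (hmem _) (hmem _) (Ioo_subset_Icc_self (hy k)))
    ((hxs.injective.comp Subtype.val_injective).sumElim hy_mono.injective fun i => hxy i)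
    (Sum.rec (fun i => by simp only [Sum.elim_inl]; omega) fun _ => le_rfl)
    (Sum.rec (fun i => by simp only [Sum.elim_inl]; have := hμ i; omega) fun _ => by simp)
    (Sum.rec (fun i => (hv i).deriv) fun k j hj => by simpa [Nat.lt_one_iff.1 hj] using hy0 k)
  simp only [Fintype.sum_sum_type, Sum.elim_inl, Sum.elim_inr, Pi.one_apply,
    Finset.sum_const, Finset.card_univ, Fintype.card_fin, smul_eq_mul, mul_one] at hsum
  rw [sum_eq_sum_subtype_sub_one_add_card m h1, Fintype.card_fin]
  omega

section CosSin

variable {c d : ℝ}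

theorem eq_zero_of_cos_sin_zero_of_deriv_zero {x : ℝ} (h : c * cos x + d * sin x = 0)
    (h' : d * cos x - c * sin x = 0) : c = 0 ∧ d = 0 :=
  ⟨by linear_combination cos x * h - sin x * h' - c * sin_sq_add_cos_sq x,
    by linear_combination sin x * h + cos x * h' - d * sin_sq_add_cos_sq x⟩

theorem eq_zero_of_deriv_zero_of_sin_sub_ne_zero {u v : ℝ} (hu : d * cos u - c * sin u = 0)
    (hv : d * cos v - c * sin v = 0) (huv : sin (u - v) ≠ 0) : c = 0 ∧ d = 0 := by
  rw [sin_sub] at huv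
  exact ⟨(mul_eq_zero.1 (by linear_combination -cos v * hu + cos u * hv)).resolve_right huv,
    (mul_eq_zero.1 (by linear_combination -sin v * hu + sin u * hv)).resolve_right huv⟩

theorem sin_half_sub_ne_zero {x y : ℝ} (hxy : x ≠ y) (hlt : |x - y| < 2 * π) :
    sin ((x - y) / 2) ≠ 0 := by
  rw [abs_lt] at hlt
  rw [Ne, sin_eq_zero_iff_of_lt_of_lt (by linarith) (by linarith)]
  exact fun h => hxy (by linarith)

theorem deriv_zero_at_midpoint {a x y : ℝ} (hxy : x ≠ y) (hlt : |x - y| < 2 * π)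
    (hx : a + c * cos x + d * sin x = 0) (hy : a + c * cos y + d * sin y = 0) :
    d * cos ((x + y) / 2) - c * sin ((x + y) / 2) = 0 := by
  have hprod : sin ((x - y) / 2) * (d * cos ((x + y) / 2) - c * sin ((x + y) / 2)) = 0 := by
    linear_combination (hx - hy - c * cos_sub_cos x y - d * sin_sub_sin x y) / 2
  exact (mul_eq_zero.1 hprod).resolve_left (sin_half_sub_ne_zero hxy hlt)

end CosSin

theorem three_le_sum_cases {r : ℕ} (m : Fin r → ℕ) (h1 : ∀ i, 1 ≤ m i)
    (hsum : 3 ≤ ∑ i, m i) :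
    (∃ i, 3 ≤ m i) ∨ (∃ i j, i ≠ j ∧ 2 ≤ m i) ∨
      ∃ i j k : Fin r, i ≠ j ∧ j ≠ k ∧ i ≠ k := by
  match r, m, h1, hsum with
  | 0, _, _, hsum => simp at hsum
  | 1, m, _, hsum => exact Or.inl ⟨0, by simpa using hsum⟩
  | 2, m, h1, hsum =>
    rw [Fin.sum_univ_two] at hsum
    by_cases h : 2 ≤ m 0
    · exact Or.inr (Or.inl ⟨0, 1, by decide, h⟩)
    · exact Or.inr (Or.inl ⟨1, 0, by decide, by have := h1 0; omega⟩)
  | r + 3, _, _, _ =>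
    exact Or.inr <| Or.inr
      ⟨⟨0, by omega⟩, ⟨1, by omega⟩, ⟨2, by omega⟩, by simp, by simp, by simp⟩

theorem vanishAtMost_trigAffine_three {a c d h : ℝ} (hh : h < 2 * π)
    (hne : trigAffine a 0 c d ≠ 0) : VanishAtMost (trigAffine a 0 c d) 3 2 (Icc 0 h) := by
  intro r xs m hmem hinj h1 _ hv
  by_contra! hsum
  have hzero (i) : a + c * cos (xs i) + d * sin (xs i) = 0 := by
    simpa [trigAffine] using (hv i).apply_eq_zero (h1 i)
  have hzero' (i) (hi : 2 ≤ m i) : d * cos (xs i) - c * sin (xs i) = 0 := by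
    simpa [trigAffine, deriv_trigAffine, sub_eq_add_neg] using hv i 1 hi
  have hzero'' (i) (hi : 3 ≤ m i) : c * cos (xs i) + d * sin (xs i) = 0 := by
    have := hv i 2 hi
    simp only [iteratedDeriv_succ, iteratedDeriv_zero, deriv_trigAffine, trigAffine] at this
    linarith
  have hwin (i j) : |xs i - xs j| < 2 * π := by
    obtain ⟨⟨hi0, hih⟩, ⟨hj0, hjh⟩⟩ := And.intro (hmem i) (hmem j)
    rw [abs_lt]
    constructor <;> linarith
  have hmid {i j} (hij : i ≠ j) :=
    deriv_zero_at_midpoint (hinj.ne hij) (hwin i j) (hzero i) (hzero j)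
  have hcd : c = 0 ∧ d = 0 := by
    rcases three_le_sum_cases m h1 hsum with
      ⟨i, hi⟩ | ⟨i, j, hij, hi⟩ | ⟨i, j, k, hij, hjk, hik⟩
    · exact eq_zero_of_cos_sin_zero_of_deriv_zero (hzero'' i hi) (hzero' i (by omega))
    · refine eq_zero_of_deriv_zero_of_sin_sub_ne_zero (hzero' i hi) (hmid hij) ?_
      convert sin_half_sub_ne_zero (hinj.ne hij) (hwin i j) using 2
      ring
    · refine eq_zero_of_deriv_zero_of_sin_sub_ne_zero (hmid hij) (hmid hjk) ?_
      convert sin_half_sub_ne_zero (hinj.ne hik) (hwin i k) using 2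
      ring
  obtain ⟨rfl, rfl⟩ := hcd
  have hr : r ≠ 0 := by rintro rfl; simp at hsum
  exact hne (trigAffine_eq_zero_iff.2 ⟨by simpa using hzero ⟨0, by omega⟩, rfl, rfl, rfl⟩)

theorem vanishAtMost_trigAffine_four {a b c d h : ℝ} (hh : h < 2 * π)
    (hne : trigAffine a b c d ≠ 0) : VanishAtMost (trigAffine a b c d) 4 3 (Icc 0 h) := by
  by_cases hconst : trigAffine b 0 d (-c) = 0
  · obtain ⟨rfl, -, rfl, hc⟩ := trigAffine_eq_zero_iff.1 hconst
    obtain rfl : c = 0 := neg_eq_zero.1 hc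
    have ha : a ≠ 0 := fun ha => hne (trigAffine_eq_zero_iff.2 ⟨ha, rfl, rfl, rfl⟩)
    exact vanishAtMost_of_forall_ne fun x _ => by simpa [trigAffine] using ha
  · refine VanishAtMost.of_deriv (differentiable_trigAffine a b c d) ordConnected_Icc ?_
    rw [deriv_trigAffine]
    exact vanishAtMost_trigAffine_three hh hconst

theorem not_vanishAtMost_one_sub_cos {μ N : ℕ} {h : ℝ} (hμ : 2 ≤ μ) (hN : N < 4)
    (hh : 2 * π ≤ h) : ¬ VanishAtMost (trigAffine 1 0 (-1) 0) μ N (Icc 0 h) := by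
  have hdouble {x : ℝ} (hx : cos x = 1) : VanishAtLeast (trigAffine 1 0 (-1) 0) 2 x := by
    have hs : sin x = 0 := by nlinarith [sin_sq_add_cos_sq x]
    intro j hj
    interval_cases j <;> simp [iteratedDeriv_succ, deriv_trigAffine, trigAffine, hx, hs]
  intro hvan
  have := hvan 2 ![0, 2 * π] ![2, 2]
    (by
      have := pi_pos
      intro i; fin_cases i <;> simp <;> first | linarith | exact ⟨by linarith, hh⟩)
    (by intro i j; fin_cases i <;> fin_cases j <;> simp [pi_ne_zero])
    (by intro i; fin_cases i <;> simp) (by intro i; fin_cases i <;> simpa using hμ)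
    (by intro i; fin_cases i; exacts [hdouble cos_zero, hdouble cos_two_pi])
  simp at this
  omega

theorem critLen_eq_of_isECOn_iff {n : ℕ} {a : Fin (n + 1) → ℝ} {L : ℝ} (hL : 0 < L)
    (hEC : ∀ h, 0 < h → (IsECOn n a (Icc 0 h) ↔ h < L)) : critLen n a = L := by
  have hS :
      {l : EReal | ∃ h : ℝ, l = h ∧ 0 < h ∧ IsECOn n a (Icc 0 h)} = (↑) '' Ioo 0 L := by
    ext l
    simp only [mem_ofPred_eq, mem_image, mem_Ioo]
    constructor
    · rintro ⟨h, rfl, h0, hh⟩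
      exact ⟨h, ⟨h0, (hEC h h0).1 hh⟩, rfl⟩
    · rintro ⟨h, ⟨h0, hh⟩, rfl⟩
      exact ⟨h, rfl, h0, (hEC h h0).2 hh⟩
  rw [critLen, hS, ← EReal.coe_strictMono.monotone.map_csSup_of_continuousAt
    continuous_coe_real_ereal.continuousAt (nonempty_Ioo.2 hL) bddAbove_Ioo, csSup_Ioo hL]

theorem isECOn_two_iff {h : ℝ} : IsECOn 2 ![0, 1, 0] (Icc 0 h) ↔ h < 2 * π := by
  refine ⟨fun hEC => ?_, fun hh F hF hne => ?_⟩
  · by_contra! hh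
    exact not_vanishAtMost_one_sub_cos (by norm_num) (by norm_num) hh
      (hEC _ (mem_kerOp_two_iff.2 ⟨1, -1, 0, rfl⟩) one_sub_cos_ne_zero)
  · obtain ⟨a, c, d, rfl⟩ := mem_kerOp_two_iff.1 hF
    exact vanishAtMost_trigAffine_three hh hne

theorem isECOn_three_iff {h : ℝ} : IsECOn 3 ![0, 0, 1, 0] (Icc 0 h) ↔ h < 2 * π := by
  refine ⟨fun hEC => ?_, fun hh F hF hne => ?_⟩
  · by_contra! hh
    exact not_vanishAtMost_one_sub_cos (by norm_num) (by norm_num) hh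
      (hEC _ (mem_kerOp_three_iff.2 ⟨1, 0, -1, 0, rfl⟩) one_sub_cos_ne_zero)
  · obtain ⟨a, b, c, d, rfl⟩ := mem_kerOp_three_iff.1 hF
    exact vanishAtMost_trigAffine_four hh hne

/-- the critical lengths of `D³ + D` (kernel `1, cos, sin`) and of `D⁴ + D²`
(kernel `1, x, cos, sin`) both equal `2π`; equivalently, for `0 < h < 2π` every nonzero
element of these kernels vanishes at most `2` (resp. `3`) times in `[0,h]` counting
multiplicities up to `3` (resp. `4`), and this fails for `h = 2π`. -/
theorem stmt8 :
    critLen 2 ![0, 1, 0] = ((2 * Real.pi : ℝ) : EReal) ∧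
    critLen 3 ![0, 0, 1, 0] = ((2 * Real.pi : ℝ) : EReal) ∧
    (∀ h : ℝ, 0 < h → h < 2 * Real.pi → ∀ a b c d : ℝ,
      (fun x => a + b * x + c * Real.cos x + d * Real.sin x) ≠ 0 →
      VanishAtMost (fun x => a + b * x + c * Real.cos x + d * Real.sin x) 4 3 (Set.Icc 0 h)) ∧
    ¬ (∀ a b c d : ℝ,
      (fun x => a + b * x + c * Real.cos x + d * Real.sin x) ≠ 0 →
      VanishAtMost (fun x => a + b * x + c * Real.cos x + d * Real.sin x) 4 3
        (Set.Icc 0 (2 * Real.pi))) ∧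
    (∀ h : ℝ, 0 < h → h < 2 * Real.pi → ∀ a c d : ℝ,
      (fun x => a + c * Real.cos x + d * Real.sin x) ≠ 0 →
      VanishAtMost (fun x => a + c * Real.cos x + d * Real.sin x) 3 2 (Set.Icc 0 h)) ∧
    ¬ (∀ a c d : ℝ,
      (fun x => a + c * Real.cos x + d * Real.sin x) ≠ 0 →
      VanishAtMost (fun x => a + c * Real.cos x + d * Real.sin x) 3 2
        (Set.Icc 0 (2 * Real.pi))) := by
  have hthree (a c d : ℝ) : (fun x => a + c * cos x + d * sin x) = trigAffine a 0 c d := by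
    funext x
    simp [trigAffine]
  refine ⟨critLen_eq_of_isECOn_iff two_pi_pos fun _ _ => isECOn_two_iff,
    critLen_eq_of_isECOn_iff two_pi_pos fun _ _ => isECOn_three_iff,
    fun h _ hh a b c d hne => vanishAtMost_trigAffine_four hh hne,
    fun H => not_vanishAtMost_one_sub_cos (by norm_num) (by norm_num) le_rfl
      (H 1 0 (-1) 0 one_sub_cos_ne_zero),
    fun h _ hh a c d hne => ?_, fun H => ?_⟩
  · rw [hthree] at hne ⊢
    exact vanishAtMost_trigAffine_three hh hne
  · have := H 1 (-1) 0
    rw [hthree] at this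
    exact not_vanishAtMost_one_sub_cos (by norm_num) (by norm_num) le_rfl (this one_sub_cos_ne_zero)
end
end

section
/- Trigonometric–hyperbolic connection criterion: let 0 < T < π and H > 0, and let E be the set of C^1 functions F on [0, T+H] for which there exist reals a, b, c, d with F(x) = a·cos x + b·sin x for x ∈ [0, T] and F(x) = c·cosh(x−T) + d·sinh(x−T) for x ∈ [T, T+H]. Then E is a 2-dimensional linear space, and E is an EC-space on [0, T+H] (i.e. every nonzero F ∈ E vanishes at most once in [0, T+H] counting multiplicities up to 2) if and only if cot T + coth H > 0. -/
/-!
The `C¹` condition at `T` forces `c = F T` and `d = F' T`, so an element of `E` is determined on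
`[0, T + H]` by its trigonometric coefficients `(a, b)`, and `E ≅ ℝ²`. A nonzero element has no
double zero, since the Wronskians of `(cos, sin)` and `(cosh, sinh)` do not vanish, and no two
zeros in the hyperbolic part. An element vanishing at `x ≤ T` is a multiple of `sin (· - x)`,
continued by `sin (T - x) cosh (· - T) + cos (T - x) sinh (· - T)`, whose sign past `T` is that of
`cot (T - x) + coth (· - T) ≥ cot T + coth H`. Conversely, if `cot T + coth H ≤ 0`, the
continuation of `sin` vanishes at `0` and, by the intermediate value theorem, in `(T, T + H]`.
-/

open scoped BigOperators

noncomputable section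

/-- `F` vanishes to order at least `m` at `x`, derivatives being taken within `J`. -/
def VanishAtLeastW (J : Set ℝ) (F : ℝ → ℝ) (m : ℕ) (x : ℝ) : Prop :=
  ∀ j < m, iteratedDerivWithin j F J x = 0

/-- `F` vanishes at most `N` times in `J`, counting multiplicities up to `μ`
(derivatives within `J`). -/
def VanishAtMostW (J : Set ℝ) (F : ℝ → ℝ) (μ N : ℕ) : Prop :=
  ∀ (r : ℕ) (xs : Fin r → ℝ) (m : Fin r → ℕ),
    (∀ i, xs i ∈ J) → Function.Injective xs →
    (∀ i, 1 ≤ m i) → (∀ i, m i ≤ μ) →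
    (∀ i, VanishAtLeastW J F (m i) (xs i)) →
    ∑ i, m i ≤ N

open Real Set

section VanishingCount

variable {J : Set ℝ} {F : ℝ → ℝ}

lemma vanishAtMostW_one_of_unique_simple_zero {μ : ℕ}
    (hsimple : ∀ x ∈ J, F x = 0 → derivWithin F J x ≠ 0)
    (hunique : ∀ x ∈ J, ∀ y ∈ J, F x = 0 → F y = 0 → x = y) :
    VanishAtMostW J F μ 1 := by
  intro r xs m hJ hinj hm1 _ hvan
  have hzero : ∀ i, F (xs i) = 0 := fun i => by
    simpa using hvan i 0 (hm1 i)
  have hm : ∀ i, m i = 1 := fun i => by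
    by_contra hi
    have h := hvan i 1 (by have := hm1 i; omega)
    rw [iteratedDerivWithin_one] at h
    exact hsimple _ (hJ i) (hzero i) h
  have : Subsingleton (Fin r) :=
    ⟨fun i j => hinj (hunique _ (hJ i) _ (hJ j) (hzero i) (hzero j))⟩
  simpa [hm] using Fintype.card_le_one_iff_subsingleton.2 this

lemma not_vanishAtMostW_one_of_ne {μ : ℕ} (hμ : 1 ≤ μ) {x y : ℝ} (hx : x ∈ J)
    (hy : y ∈ J) (hxy : x ≠ y) (hFx : F x = 0) (hFy : F y = 0) : ¬VanishAtMostW J F μ 1 := by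
  intro h
  have hinj : Function.Injective ![x, y] := by
    intro i j hij
    fin_cases i <;> fin_cases j <;> simp_all [eq_comm]
  have := h 2 ![x, y] (fun _ => 1) (by simp [Fin.forall_fin_two, hx, hy]) hinj
    (fun _ => le_rfl) (fun _ => hμ) (by simp [Fin.forall_fin_two, VanishAtLeastW, hFx, hFy])
  simp at this

end VanishingCount

section TrigHypAlgebra

lemma cos_sin_coeffs_eq_zero {a b x : ℝ} (h₀ : a * cos x + b * sin x = 0)
    (h₁ : b * cos x - a * sin x = 0) : a = 0 ∧ b = 0 :=
  ⟨by linear_combination cos x * h₀ - sin x * h₁ - a * sin_sq_add_cos_sq x,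
    by linear_combination sin x * h₀ + cos x * h₁ - b * sin_sq_add_cos_sq x⟩

lemma cosh_sinh_coeffs_eq_zero {c d s : ℝ} (h₀ : c * cosh s + d * sinh s = 0)
    (h₁ : c * sinh s + d * cosh s = 0) : c = 0 ∧ d = 0 :=
  ⟨by linear_combination cosh s * h₀ - sinh s * h₁ - c * cosh_sq_sub_sinh_sq s,
    by linear_combination cosh s * h₁ - sinh s * h₀ - d * cosh_sq_sub_sinh_sq s⟩

lemma cosh_sinh_coeffs_eq_zero_of_lt {c d s t : ℝ} (hst : s < t)
    (hs : c * cosh s + d * sinh s = 0) (ht : c * cosh t + d * sinh t = 0) : c = 0 ∧ d = 0 := by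
  have hW : sinh (t - s) ≠ 0 := (sinh_pos_iff.2 (by linarith)).ne'
  rw [sinh_sub] at hW
  exact ⟨mul_right_cancel₀ hW (by linear_combination sinh t * hs - sinh s * ht),
    mul_right_cancel₀ hW (by linear_combination cosh s * ht - cosh t * hs)⟩

lemma cot_add_coth_pos_iff {T H : ℝ} (hT : 0 < sin T) (hH : 0 < sinh H) :
    0 < cos T / sin T + cosh H / sinh H ↔ 0 < sin T * cosh H + cos T * sinh H := by
  have : cos T / sin T + cosh H / sinh H =
      (sin T * cosh H + cos T * sinh H) / (sin T * sinh H) := by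
    field_simp; ring
  rw [this, div_pos_iff_of_pos_right (mul_pos hT hH)]

/-- Since `cot` and `coth` decrease on `(0, π)` and `(0, ∞)`, the positivity of
`sin T cosh H + cos T sinh H` propagates to all smaller `u` and `s`. -/
lemma sin_mul_cosh_add_cos_mul_sinh_pos {T H u s : ℝ} (hTpi : T < π)
    (hP : 0 < sin T * cosh H + cos T * sinh H) (hu : 0 ≤ u) (huT : u ≤ T) (hs : 0 < s)
    (hsH : s ≤ H) : 0 < sin u * cosh s + cos u * sinh s := by
  rcases hu.eq_or_lt with rfl | hu
  · simpa using sinh_pos_iff.2 hs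
  have hsinT : 0 < sin T := sin_pos_of_pos_of_lt_pi (by linarith) hTpi
  have hsinhH : 0 < sinh H := sinh_pos_iff.2 (by linarith)
  have key : sin T * sinh H * (sin u * cosh s + cos u * sinh s) =
      (sin T * cosh H + cos T * sinh H) * (sin u * sinh s) + sin u * sin T * sinh (H - s)
        + sinh s * sinh H * sin (T - u) := by
    rw [sinh_sub, sin_sub]; ring
  have h₁ : 0 < (sin T * cosh H + cos T * sinh H) * (sin u * sinh s) :=
    mul_pos hP (mul_pos (sin_pos_of_pos_of_lt_pi hu (by linarith)) (sinh_pos_iff.2 hs))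
  have h₂ : 0 ≤ sin u * sin T * sinh (H - s) :=
    mul_nonneg (mul_nonneg (sin_nonneg_of_nonneg_of_le_pi hu.le (by linarith)) hsinT.le)
      (sinh_nonneg_iff.2 (by linarith))
  have h₃ : 0 ≤ sinh s * sinh H * sin (T - u) :=
    mul_nonneg (mul_nonneg (sinh_pos_iff.2 hs).le hsinhH.le)
      (sin_nonneg_of_nonneg_of_le_pi (by linarith) (by linarith))
  exact pos_of_mul_pos_right (key ▸ by linarith : 0 < sin T * sinh H * _)
    (mul_pos hsinT hsinhH).le

end TrigHypAlgebra

/-- The hyperbolic coefficients are the value and the derivative of the trigonometric part at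
`T`, which is what makes the glued function `C¹`. -/
def trigHyp (T a b x : ℝ) : ℝ :=
  if x ≤ T then a * cos x + b * sin x
  else (a * cos T + b * sin T) * cosh (x - T) + (b * cos T - a * sin T) * sinh (x - T)

def trigHypDeriv (T a b x : ℝ) : ℝ :=
  if x ≤ T then b * cos x - a * sin x
  else (a * cos T + b * sin T) * sinh (x - T) + (b * cos T - a * sin T) * cosh (x - T)

def trigHypSpace (T H : ℝ) : Set (ℝ → ℝ) :=
  {F | ContDiffOn ℝ 1 F (Icc 0 (T + H)) ∧
    ∃ a b c d : ℝ, (∀ x ∈ Icc 0 T, F x = a * cos x + b * sin x) ∧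
      ∀ x ∈ Icc T (T + H), F x = c * cosh (x - T) + d * sinh (x - T)}

section TrigHypCalculus

lemma hasDerivAt_mul_cos_add_mul_sin (a b x : ℝ) :
    HasDerivAt (fun y => a * cos y + b * sin y) (b * cos x - a * sin x) x :=
  (((hasDerivAt_cos x).const_mul a).add ((hasDerivAt_sin x).const_mul b)).congr_deriv
    (by ring)

lemma hasDerivAt_mul_cosh_add_mul_sinh (c d T x : ℝ) :
    HasDerivAt (fun y => c * cosh (y - T) + d * sinh (y - T))
      (c * sinh (x - T) + d * cosh (x - T)) x := by
  have h := (hasDerivAt_id' x).sub_const T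
  exact ((h.cosh.const_mul c).add (h.sinh.const_mul d)).congr_deriv (by ring)

lemma HasDerivAt.of_eqOn_Iic_of_eqOn_Ici {f g h : ℝ → ℝ} {a v : ℝ} (hg : HasDerivAt g v a)
    (hh : HasDerivAt h v a) (hfg : EqOn f g (Iic a)) (hfh : EqOn f h (Ici a)) :
    HasDerivAt f v a := by
  have := (hg.hasDerivWithinAt.congr hfg (hfg self_mem_Iic)).union
    (hh.hasDerivWithinAt.congr hfh (hfh self_mem_Ici))
  rwa [Iic_union_Ici, hasDerivWithinAt_univ] at this

lemma hasDerivAt_trigHyp (T a b x : ℝ) : HasDerivAt (trigHyp T a b) (trigHypDeriv T a b x) x := by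
  rcases lt_trichotomy x T with h | rfl | h
  · have hev : trigHyp T a b =ᶠ[nhds x] fun y => a * cos y + b * sin y := by
      filter_upwards [Iio_mem_nhds h] with y hy
      simp [trigHyp, (mem_Iio.1 hy).le]
    simpa [trigHypDeriv, h.le] using
      (hasDerivAt_mul_cos_add_mul_sin a b x).congr_of_eventuallyEq hev
  · refine HasDerivAt.of_eqOn_Iic_of_eqOn_Ici
      ((hasDerivAt_mul_cos_add_mul_sin a b x).congr_deriv (by simp [trigHypDeriv]))
      ((hasDerivAt_mul_cosh_add_mul_sinh (a * cos x + b * sin x) (b * cos x - a * sin x) x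
        x).congr_deriv (by simp [trigHypDeriv])) ?_ ?_
    · intro y hy
      simp [trigHyp, mem_Iic.1 hy]
    · intro y hy
      rcases (mem_Ici.1 hy).eq_or_lt with rfl | hlt
      · simp [trigHyp]
      · simp [trigHyp, not_le.2 hlt]
  · have hev : trigHyp T a b =ᶠ[nhds x] fun y =>
        (a * cos T + b * sin T) * cosh (y - T) + (b * cos T - a * sin T) * sinh (y - T) := by
      filter_upwards [Ioi_mem_nhds h] with y hy
      simp [trigHyp, not_le.2 (mem_Ioi.1 hy)]
    simpa [trigHypDeriv, not_le.2 h] using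
      (hasDerivAt_mul_cosh_add_mul_sinh _ _ T x).congr_of_eventuallyEq hev

lemma continuous_trigHypDeriv (T a b : ℝ) : Continuous (trigHypDeriv T a b) :=
  Continuous.if_le (by fun_prop) (by fun_prop) continuous_id continuous_const
    (fun x hx => by simp [hx])

lemma contDiff_trigHyp (T a b : ℝ) : ContDiff ℝ 1 (trigHyp T a b) := by
  rw [contDiff_one_iff_deriv]
  refine ⟨fun x => (hasDerivAt_trigHyp T a b x).differentiableAt, ?_⟩
  rw [show deriv (trigHyp T a b) = trigHypDeriv T a b from
    funext fun x => (hasDerivAt_trigHyp T a b x).deriv]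
  exact continuous_trigHypDeriv T a b

lemma derivWithin_eq_of_eqOn_of_subset {f g : ℝ → ℝ} {s t : Set ℝ} {x v : ℝ}
    (hst : s ⊆ t) (hs : UniqueDiffWithinAt ℝ s x) (hf : DifferentiableWithinAt ℝ f t x)
    (hfg : EqOn f g s) (hx : x ∈ s) (hg : HasDerivAt g v x) : derivWithin f t x = v := by
  rw [← derivWithin_subset hst hs hf, derivWithin_congr hfg (hfg hx)]
  exact hg.hasDerivWithinAt.derivWithin hs

end TrigHypCalculus

section TrigHypSpace

variable {T H : ℝ}

lemma trigHyp_add (T a b a' b' x : ℝ) :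
    trigHyp T (a + a') (b + b') x = trigHyp T a b x + trigHyp T a' b' x := by
  unfold trigHyp; split_ifs <;> ring

lemma trigHyp_mul (T k a b x : ℝ) : trigHyp T (k * a) (k * b) x = k * trigHyp T a b x := by
  unfold trigHyp; split_ifs <;> ring

lemma trigHyp_mem_trigHypSpace (a b : ℝ) : trigHyp T a b ∈ trigHypSpace T H := by
  refine ⟨(contDiff_trigHyp T a b).contDiffOn, a, b, a * cos T + b * sin T,
    b * cos T - a * sin T, fun x hx => by simp [trigHyp, hx.2], fun x hx => ?_⟩
  rcases hx.1.eq_or_lt with rfl | hlt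
  · simp [trigHyp]
  · simp [trigHyp, not_le.2 hlt]

lemma exists_eqOn_trigHyp (hT : 0 < T) (hH : 0 < H) {F : ℝ → ℝ}
    (hF : F ∈ trigHypSpace T H) :
    ∃ a b, EqOn F (trigHyp T a b) (Icc 0 (T + H)) := by
  obtain ⟨hC1, a, b, c, d, htrig, hhyp⟩ := hF
  have hTL : T ∈ Icc 0 T := right_mem_Icc.2 hT.le
  have hTR : T ∈ Icc T (T + H) := left_mem_Icc.2 (by linarith)
  have hc : c = a * cos T + b * sin T := by simpa [← htrig T hTL] using (hhyp T hTR).symm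
  have hdiff : DifferentiableWithinAt ℝ F (Icc 0 (T + H)) T :=
    hC1.differentiableOn one_ne_zero T ⟨hT.le, by linarith⟩
  have hd : d = b * cos T - a * sin T := by
    have hL := derivWithin_eq_of_eqOn_of_subset (Icc_subset_Icc le_rfl (by linarith))
      (uniqueDiffOn_Icc hT T hTL) hdiff htrig hTL (hasDerivAt_mul_cos_add_mul_sin a b T)
    have hR := derivWithin_eq_of_eqOn_of_subset (Icc_subset_Icc hT.le le_rfl)
      (uniqueDiffOn_Icc (by linarith) T hTR) hdiff hhyp hTR
      (hasDerivAt_mul_cosh_add_mul_sinh c d T T)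
    simpa [hL] using hR.symm
  refine ⟨a, b, fun x hx => ?_⟩
  by_cases hxT : x ≤ T
  · simp [trigHyp, hxT, htrig x ⟨hx.1, hxT⟩]
  · simp [trigHyp, hxT, hhyp x ⟨(not_le.1 hxT).le, hx.2⟩, hc, hd]

def trigHypRestrict (T H : ℝ) : ℝ × ℝ →ₗ[ℝ] (Icc (0 : ℝ) (T + H) → ℝ) where
  toFun p := (Icc 0 (T + H)).domRestrict (trigHyp T p.1 p.2)
  map_add' p q := funext fun x => trigHyp_add T p.1 p.2 q.1 q.2 x
  map_smul' k p := funext fun x => trigHyp_mul T k p.1 p.2 x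

lemma image_domRestrict_trigHypSpace (hT : 0 < T) (hH : 0 < H) :
    (Icc 0 (T + H)).domRestrict '' trigHypSpace T H = LinearMap.range (trigHypRestrict T H) := by
  ext g
  constructor
  · rintro ⟨F, hF, rfl⟩
    obtain ⟨a, b, hab⟩ := exists_eqOn_trigHyp hT hH hF
    exact ⟨(a, b), funext fun x => (hab x.2).symm⟩
  · rintro ⟨⟨a, b⟩, rfl⟩
    exact ⟨_, trigHyp_mem_trigHypSpace a b, rfl⟩

lemma trigHypRestrict_injective (hT : 0 < T) (hTpi : T < π) (hH : 0 ≤ H) :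
    Function.Injective (trigHypRestrict T H) := by
  rw [← LinearMap.ker_eq_bot, LinearMap.ker_eq_bot']
  rintro ⟨a, b⟩ h
  have h₀ : trigHyp T a b 0 = 0 := congrFun h ⟨0, le_rfl, by linarith⟩
  have hT' : trigHyp T a b T = 0 := congrFun h ⟨T, hT.le, by linarith⟩
  simp only [trigHyp, hT.le, le_rfl, if_true, cos_zero, sin_zero] at h₀ hT'
  have ha : a = 0 := by simpa using h₀
  have hb : b = 0 := by simpa [ha, (sin_pos_of_pos_of_lt_pi hT hTpi).ne'] using hT'
  simp [ha, hb]

end TrigHypSpace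

section Zeros

variable {T H a b : ℝ}

lemma trigHyp_eq_mul_of_zero {x : ℝ} (h : a * cos x + b * sin x = 0) (y : ℝ) :
    trigHyp T a b y = (b * cos x - a * sin x) * trigHyp T (-sin x) (cos x) y := by
  rw [← trigHyp_mul]
  congr 1
  · linear_combination cos x * h - a * sin_sq_add_cos_sq x
  · linear_combination sin x * h - b * sin_sq_add_cos_sq x

/-- `trigHyp T (-sin x) (cos x)` is `sin (· - x)` on `[0, T]`: the element vanishing at `x`
with slope `1`. -/
lemma trigHyp_neg_sin_cos_pos (hTpi : T < π) (hP : 0 < sin T * cosh H + cos T * sinh H)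
    {x y : ℝ} (hx : 0 ≤ x) (hxT : x ≤ T) (hxy : x < y) (hy : y ≤ T + H) :
    0 < trigHyp T (-sin x) (cos x) y := by
  by_cases hyT : y ≤ T
  · have : trigHyp T (-sin x) (cos x) y = sin (y - x) := by
      simp only [trigHyp, if_pos hyT, sin_sub]; ring
    rw [this]
    exact sin_pos_of_pos_of_lt_pi (by linarith) (by linarith)
  · have : trigHyp T (-sin x) (cos x) y =
        sin (T - x) * cosh (y - T) + cos (T - x) * sinh (y - T) := by
      simp only [trigHyp, if_neg hyT, sin_sub, cos_sub]; ring
    rw [this]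
    exact sin_mul_cosh_add_cos_mul_sinh_pos hTpi hP (by linarith) (by linarith) (by linarith)
      (by linarith)

lemma eq_zero_of_trigHyp_eq_zero_of_trigHypDeriv_eq_zero {x : ℝ} (h₀ : trigHyp T a b x = 0)
    (h₁ : trigHypDeriv T a b x = 0) : a = 0 ∧ b = 0 := by
  unfold trigHyp at h₀
  unfold trigHypDeriv at h₁
  split_ifs at h₀ h₁
  · exact cos_sin_coeffs_eq_zero h₀ h₁
  · obtain ⟨hc, hd⟩ := cosh_sinh_coeffs_eq_zero h₀ h₁
    exact cos_sin_coeffs_eq_zero hc hd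

lemma eq_zero_of_trigHyp_eq_zero_of_lt (hTpi : T < π)
    (hP : 0 < sin T * cosh H + cos T * sinh H) {x y : ℝ} (hx : 0 ≤ x) (hxy : x < y)
    (hy : y ≤ T + H) (hzx : trigHyp T a b x = 0) (hzy : trigHyp T a b y = 0) :
    a = 0 ∧ b = 0 := by
  by_cases hxT : x ≤ T
  · have hzx' : a * cos x + b * sin x = 0 := by simpa [trigHyp, hxT] using hzx
    rw [trigHyp_eq_mul_of_zero hzx'] at hzy
    have hk := (mul_eq_zero.1 hzy).resolve_right
      (trigHyp_neg_sin_cos_pos hTpi hP hx hxT hxy hy).ne'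
    exact cos_sin_coeffs_eq_zero hzx' hk
  · have hyT : ¬y ≤ T := fun h => hxT (hxy.le.trans h)
    simp only [trigHyp, hxT, hyT, if_false] at hzx hzy
    obtain ⟨hc, hd⟩ := cosh_sinh_coeffs_eq_zero_of_lt (by linarith : x - T < y - T) hzx hzy
    exact cos_sin_coeffs_eq_zero hc hd

lemma exists_trigHyp_zero_of_nonpos (hsinT : 0 < sin T) (hH : 0 ≤ H)
    (hP : ¬0 < sin T * cosh H + cos T * sinh H) :
    ∃ s ∈ Ioc 0 H, trigHyp T 0 1 (T + s) = 0 := by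
  have hcont : ContinuousOn (fun s => sin T * cosh s + cos T * sinh s) (Icc 0 H) := by
    fun_prop
  obtain ⟨s, hs, hzero⟩ :=
    intermediate_value_Ioc' hH hcont ⟨not_lt.1 hP, by simpa using hsinT⟩
  refine ⟨s, hs, ?_⟩
  simpa [trigHyp, not_le.2 hs.1] using hzero

end Zeros

section ExtendedChebyshev

variable {T H : ℝ}

lemma vanishAtMostW_of_mem_trigHypSpace (hT : 0 < T) (hTpi : T < π) (hH : 0 < H)
    (hP : 0 < sin T * cosh H + cos T * sinh H) {F : ℝ → ℝ} (hF : F ∈ trigHypSpace T H)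
    (hne : ¬∀ x ∈ Icc 0 (T + H), F x = 0) : VanishAtMostW (Icc 0 (T + H)) F 2 1 := by
  obtain ⟨a, b, hab⟩ := exists_eqOn_trigHyp hT hH hF
  have hab0 : ¬(a = 0 ∧ b = 0) := by
    rintro ⟨rfl, rfl⟩
    exact hne fun x hx => by simpa [trigHyp] using hab hx
  apply vanishAtMostW_one_of_unique_simple_zero
  · intro x hx h₀ h₁
    have hderiv : derivWithin F (Icc 0 (T + H)) x = trigHypDeriv T a b x := by
      rw [derivWithin_congr hab (hab hx)]
      exact (hasDerivAt_trigHyp T a b x).hasDerivWithinAt.derivWithin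
        (uniqueDiffOn_Icc (by linarith) x hx)
    exact hab0
      (eq_zero_of_trigHyp_eq_zero_of_trigHypDeriv_eq_zero (hab hx ▸ h₀) (hderiv ▸ h₁))
  · intro x hx y hy hx₀ hy₀
    rw [hab hx] at hx₀
    rw [hab hy] at hy₀
    by_contra hxy
    rcases lt_or_gt_of_ne hxy with h | h
    · exact hab0 (eq_zero_of_trigHyp_eq_zero_of_lt hTpi hP hx.1 h hy.2 hx₀ hy₀)
    · exact hab0 (eq_zero_of_trigHyp_eq_zero_of_lt hTpi hP hy.1 h hx.2 hy₀ hx₀)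

lemma exists_not_vanishAtMostW (hT : 0 ≤ T) (hsinT : 0 < sin T) (hH : 0 ≤ H)
    (hP : ¬0 < sin T * cosh H + cos T * sinh H) :
    ∃ F ∈ trigHypSpace T H,
      (¬∀ x ∈ Icc 0 (T + H), F x = 0) ∧ ¬VanishAtMostW (Icc 0 (T + H)) F 2 1 := by
  obtain ⟨s, ⟨hs₀, hsH⟩, hzero⟩ := exists_trigHyp_zero_of_nonpos hsinT hH hP
  refine ⟨trigHyp T 0 1, trigHyp_mem_trigHypSpace 0 1, fun h => ?_,
    not_vanishAtMostW_one_of_ne one_le_two ⟨le_rfl, by linarith⟩ ⟨by linarith, by linarith⟩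
      (by linarith) (by simp [trigHyp, hT]) hzero⟩
  have hT' := h T ⟨hT, by linarith⟩
  simp only [trigHyp, le_rfl, if_true] at hT'
  linarith

end ExtendedChebyshev

/-- trigonometric–hyperbolic connection criterion. For `0 < T < π`, `H > 0`,
the space `E` of `C¹` functions on `[0, T+H]` equal to `a cos x + b sin x` on `[0,T]` and to
`c cosh(x-T) + d sinh(x-T)` on `[T, T+H]` is a 2-dimensional linear space, and `E` is an
EC-space on `[0, T+H]` if and only if `cot T + coth H > 0`. -/
theorem stmt10 (T H : ℝ) (hT : 0 < T) (hTpi : T < Real.pi) (hH : 0 < H)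
    (E : Set (ℝ → ℝ))
    (hE : E = {F : ℝ → ℝ | ContDiffOn ℝ 1 F (Set.Icc 0 (T + H)) ∧
      ∃ a b c d : ℝ,
        (∀ x ∈ Set.Icc (0 : ℝ) T, F x = a * Real.cos x + b * Real.sin x) ∧
        (∀ x ∈ Set.Icc T (T + H), F x = c * Real.cosh (x - T) + d * Real.sinh (x - T))}) :
    (∃ V : Submodule ℝ (↥(Set.Icc (0 : ℝ) (T + H)) → ℝ),
        (V : Set (↥(Set.Icc (0 : ℝ) (T + H)) → ℝ)) =
          (fun F => (Set.Icc (0 : ℝ) (T + H)).restrict F) '' E ∧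
        Module.finrank ℝ V = 2) ∧
    ((∀ F ∈ E, ¬(∀ x ∈ Set.Icc (0 : ℝ) (T + H), F x = 0) →
        VanishAtMostW (Set.Icc (0 : ℝ) (T + H)) F 2 1) ↔
      0 < Real.cos T / Real.sin T + Real.cosh H / Real.sinh H) := by
  change E = trigHypSpace T H at hE
  subst hE
  have hsinT : 0 < sin T := sin_pos_of_pos_of_lt_pi hT hTpi
  rw [cot_add_coth_pos_iff hsinT (sinh_pos_iff.2 hH)]
  refine ⟨⟨LinearMap.range (trigHypRestrict T H),
      (image_domRestrict_trigHypSpace hT hH).symm, ?_⟩, fun hEC => ?_,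
    fun hP F hF hne => vanishAtMostW_of_mem_trigHypSpace hT hTpi hH hP hF hne⟩
  · rw [LinearMap.finrank_range_of_inj (trigHypRestrict_injective hT hTpi hH.le)]
    simp
  · by_contra hP
    obtain ⟨F, hF, hne, hnot⟩ := exists_not_vanishAtMostW hT.le hsinT hH.le hP
    exact hnot (hEC F hF hne)
end
end

section
/- For every n ≥ 1, the 2n-dimensional space E spanned by cos x, sin x, cos 2x, sin 2x, …, cos nx, sin nx has critical length π: for every 0 < h < π, every nonzero F ∈ E vanishes at most 2n−1 times in [0,h] counting multiplicities up to 2n, and E is not an EC-space on [0, π] (there exists a nonzero F ∈ E vanishing at least 2n times in [0, π] counting multiplicities up to 2n). -/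
/-!
Write `F(x) = ∑ₖ (cₖ cos kx + dₖ sin kx)` as `e^{-inx} Q(e^{ix})` with `Q` a complex polynomial
of degree at most `2n` whose coefficient of `X^n` vanishes. Comparing analytic orders of the
entire extension of `F`, a zero of `F` of order `m` at `x` is a root of `Q` of multiplicity at
least `m` at `e^{ix}`. If `F` had `2n` zeros in `[0, h]`
with `h < π`, these would be all the roots of `Q`, and they lie in the open half-plane
bisected by the ray through `e^{ih/2}`. By the Gauss–Lucas theorem so do the roots of
`Q^{(n)}`, whereas `Q^{(n)}(0) = n! Qₙ = 0`.

On `[0, π]` the bound fails for `sin (x/2) cos (x/2)^(2n-1)`, a combination of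
`sin x, …, sin nx` with zeros of orders `1` at `0` and `2n - 1` at `π`.
-/

open scoped BigOperators

noncomputable section

open Polynomial Complex

namespace Polynomial

theorem rootSet_iterate_derivative_subset {K : Set ℂ} (hK : Convex ℝ K) {P : ℂ[X]}
    (hP : P.rootSet ℂ ⊆ K) (k : ℕ) : (derivative^[k] P).rootSet ℂ ⊆ K := by
  induction k with
  | zero => exact hP
  | succ k ih =>
    rw [Function.iterate_succ_apply']
    by_cases hdeg : 0 < (derivative^[k] P).degree
    · exact (rootSet_derivative_subset_convexHull_rootSet hdeg).trans (convexHull_min ih hK)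
    · rw [eq_C_of_degree_le_zero (not_lt.mp hdeg), derivative_C, rootSet_zero]
      exact Set.empty_subset K

theorem iterate_derivative_ne_zero {K : Type*} [Field K] [CharZero K] {Q : K[X]} (hQ : Q ≠ 0)
    {n : ℕ} (hn : n ≤ Q.natDegree) : derivative^[n] Q ≠ 0 := by
  intro h
  have hlead := congrArg (coeff · (Q.natDegree - n)) h
  simp only [coeff_iterate_derivative, Nat.sub_add_cancel hn, coeff_zero] at hlead
  simp [Nat.descFactorial_eq_zero_iff_lt, hQ] at hlead
  omega

/-- `n! Qₙ = Q^{(n)}(0)`, and by Gauss–Lucas the roots of `Q^{(n)}` lie in `K`. -/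
theorem coeff_ne_zero_of_rootSet_subset {K : Set ℂ} (hK : Convex ℝ K) (h0 : (0 : ℂ) ∉ K)
    {Q : ℂ[X]} (hQ : Q ≠ 0) (hQK : Q.rootSet ℂ ⊆ K) {n : ℕ} (hn : n ≤ Q.natDegree) :
    Q.coeff n ≠ 0 := by
  intro hcoeff
  refine h0 (rootSet_iterate_derivative_subset hK hQK n ?_)
  rw [mem_rootSet, coe_aeval_eq_eval, ← coeff_zero_eq_eval_zero, coeff_iterate_derivative]
  exact ⟨iterate_derivative_ne_zero hQ hn, by simp [hcoeff]⟩

section RootCount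

variable {K ι : Type*} [Field K] [Fintype ι] {Q : K[X]} {w : ι → K} {m : ι → ℕ}

theorem prod_X_sub_C_pow_dvd (hw : Function.Injective w)
    (hm : ∀ i, m i ≤ Q.rootMultiplicity (w i)) : ∏ i, (X - C (w i)) ^ m i ∣ Q :=
  Finset.prod_dvd_of_coprime (fun _ _ _ _ hij => ((pairwise_coprime_X_sub_C hw) hij).pow)
    fun i _ => (pow_dvd_pow _ (hm i)).trans (pow_rootMultiplicity_dvd Q (w i))

theorem natDegree_prod_X_sub_C_pow : (∏ i, (X - C (w i)) ^ m i).natDegree = ∑ i, m i := by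
  rw [natDegree_prod _ _ fun i _ => pow_ne_zero _ (X_sub_C_ne_zero (w i))]
  simp

theorem sum_le_natDegree_of_le_rootMultiplicity (hQ : Q ≠ 0) (hw : Function.Injective w)
    (hm : ∀ i, m i ≤ Q.rootMultiplicity (w i)) : ∑ i, m i ≤ Q.natDegree :=
  natDegree_prod_X_sub_C_pow (w := w) ▸ natDegree_le_of_dvd (prod_X_sub_C_pow_dvd hw hm) hQ

theorem exists_eq_of_isRoot_of_natDegree_le_sum (hQ : Q ≠ 0) (hw : Function.Injective w)
    (hm : ∀ i, m i ≤ Q.rootMultiplicity (w i)) (hdeg : Q.natDegree ≤ ∑ i, m i) {z : K}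
    (hz : Q.IsRoot z) : ∃ i, w i = z := by
  have hQD : Q = C Q.leadingCoeff * ∏ i, (X - C (w i)) ^ m i :=
    eq_leadingCoeff_mul_of_monic_of_dvd_of_natDegree_le
      (monic_prod_of_monic _ _ fun i _ => (monic_X_sub_C (w i)).pow _)
      (prod_X_sub_C_pow_dvd hw hm) (natDegree_prod_X_sub_C_pow (w := w) ▸ hdeg)
  rw [IsRoot, hQD, eval_mul, eval_C, eval_prod, mul_eq_zero, Finset.prod_eq_zero_iff] at hz
  obtain hlc | ⟨i, -, hi⟩ := hz
  · exact absurd (leadingCoeff_eq_zero.mp hlc) hQ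
  · simp only [eval_pow, eval_sub, eval_X, eval_C] at hi
    exact ⟨i, (sub_eq_zero.mp (pow_eq_zero_iff'.mp hi).1).symm⟩

end RootCount

theorem analyticOrderAt_eval {𝕜 : Type*} [NontriviallyNormedField 𝕜] {Q : 𝕜[X]}
    (hQ : Q ≠ 0) (w : 𝕜) : analyticOrderAt (fun z => Q.eval z) w = Q.rootMultiplicity w := by
  obtain ⟨R, hQR, hR⟩ := Q.exists_eq_pow_rootMultiplicity_mul_and_not_dvd hQ w
  refine ((AnalyticOnNhd.eval_polynomial Q) w trivial).analyticOrderAt_eq_natCast.mpr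
    ⟨fun z => R.eval z, (AnalyticOnNhd.eval_polynomial R) w trivial, ?_, ?_⟩
  · rwa [dvd_iff_isRoot] at hR
  · refine Filter.Eventually.of_forall fun z => ?_
    conv_lhs => rw [hQR]
    simp [smul_eq_mul]

end Polynomial

theorem le_analyticOrderAt_mul_pow {𝕜 : Type*} [NontriviallyNormedField 𝕜] {f g : 𝕜 → 𝕜}
    {z₀ : 𝕜} (hf : AnalyticAt 𝕜 f z₀) (hg : AnalyticAt 𝕜 g z₀) (hg₀ : g z₀ = 0) (j : ℕ) :
    (j : ℕ∞) ≤ analyticOrderAt (fun z => f z * g z ^ j) z₀ := by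
  have hord : 1 ≤ analyticOrderAt g z₀ :=
    Order.one_le_iff_ne_zero.mpr (analyticOrderAt_ne_zero.mpr ⟨hg, hg₀⟩)
  rw [show (fun z => f z * g z ^ j) = f * g ^ j from rfl, analyticOrderAt_mul hf (hg.pow j),
    analyticOrderAt_pow hg]
  calc (j : ℕ∞) = j • 1 := by simp
    _ ≤ j • analyticOrderAt g z₀ := by gcongr
    _ ≤ _ := le_add_self

theorem analyticOrderAt_exp_mul_eval_exp (k : ℂ) (Q : ℂ[X]) (z₀ : ℂ) :
    analyticOrderAt (fun z => exp (k * z) * Q.eval (exp (z * I))) z₀ =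
      analyticOrderAt (fun z => Q.eval z) (exp (z₀ * I)) := by
  have hexp : AnalyticAt ℂ (fun z => exp (z * I)) z₀ := by fun_prop
  have hQ := (AnalyticOnNhd.eval_polynomial (𝕜 := ℂ) Q) (exp (z₀ * I)) trivial
  have hderiv : deriv (fun z => exp (z * I)) z₀ ≠ 0 := by
    rw [((hasDerivAt_mul_const I).cexp).deriv]
    exact mul_ne_zero (exp_ne_zero _) I_ne_zero
  rw [show (fun z => exp (k * z) * Q.eval (exp (z * I))) =
      (fun z => exp (k * z)) * ((fun z => Q.eval z) ∘ fun z => exp (z * I)) from rfl,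
    analyticOrderAt_mul (by fun_prop)
      (AnalyticAt.comp (g := fun z => Q.eval z) (f := fun z => exp (z * I)) hQ hexp),
    (analyticOrderAt_eq_zero (f := fun z => exp (k * z))).mpr (Or.inr (exp_ne_zero _)), zero_add,
    analyticOrderAt_comp_of_deriv_ne_zero hexp hderiv]

theorem ofReal_iteratedDeriv_of_forall_ofReal_eq {F : ℝ → ℝ} {Φ : ℂ → ℂ}
    (hΦ : Differentiable ℂ Φ) (hF : ∀ x : ℝ, (F x : ℂ) = Φ x) (k : ℕ) (x : ℝ) :
    ((iteratedDeriv k F x : ℝ) : ℂ) = iteratedDeriv k Φ x := by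
  induction k generalizing F Φ with
  | zero => simpa using hF x
  | succ k ih =>
    rw [iteratedDeriv_succ', iteratedDeriv_succ']
    refine ih hΦ.deriv fun y => ?_
    have hre : HasDerivAt F (deriv Φ y).re y := by
      simpa [← hF] using (hΦ y).hasDerivAt.real_of_complex
    have hΦy : HasDerivAt (fun t : ℝ => (F t : ℂ)) (deriv Φ y) y := by
      simpa [hF] using (hΦ y).hasDerivAt.comp_ofReal
    rw [hre.deriv, hre.ofReal_comp.unique hΦy]

theorem vanishAtLeast_iff_le_analyticOrderAt {F : ℝ → ℝ} {Φ : ℂ → ℂ}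
    (hΦ : Differentiable ℂ Φ) (hF : ∀ x : ℝ, (F x : ℂ) = Φ x) (m : ℕ) (x : ℝ) :
    VanishAtLeast F m x ↔ m ≤ analyticOrderAt Φ x := by
  rw [natCast_le_analyticOrderAt_iff_iteratedDeriv_eq_zero (hΦ.analyticAt x), VanishAtLeast]
  simp only [← ofReal_iteratedDeriv_of_forall_ofReal_eq hΦ hF, ofReal_eq_zero]

theorem le_rootMultiplicity_of_vanishAtLeast {F : ℝ → ℝ} {Q : ℂ[X]} (hQ : Q ≠ 0) {k : ℂ}
    (hF : ∀ x : ℝ, (F x : ℂ) = exp (k * x) * Q.eval (exp (x * I))) {m : ℕ} {x : ℝ}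
    (hm : VanishAtLeast F m x) : m ≤ Q.rootMultiplicity (exp (x * I)) := by
  have hΦ : Differentiable ℂ fun z => exp (k * z) * Q.eval (exp (z * I)) :=
    (differentiable_exp.comp (differentiable_id.const_mul k)).mul
      (Q.differentiable.comp (differentiable_exp.comp (differentiable_id.mul_const I)))
  rw [vanishAtLeast_iff_le_analyticOrderAt hΦ hF, analyticOrderAt_exp_mul_eval_exp,
    Q.analyticOrderAt_eval hQ] at hm
  exact_mod_cast hm

def trigSum {n : ℕ} (c d : Fin n → ℝ) (x : ℝ) : ℝ :=
  ∑ j : Fin n, (c j * Real.cos (((j : ℕ) + 1 : ℝ) * x) + d j * Real.sin (((j : ℕ) + 1 : ℝ) * x))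

def trigPoly {n : ℕ} (c d : Fin n → ℝ) : ℂ[X] :=
  ∑ j : Fin n,
    (C ((c j - I * d j) / 2) * X ^ (n + (j + 1)) + C ((c j + I * d j) / 2) * X ^ (n - (j + 1)))

theorem coeff_trigPoly_self {n : ℕ} (c d : Fin n → ℝ) : (trigPoly c d).coeff n = 0 := by
  simp only [trigPoly, finsetSum_coeff, coeff_add, coeff_C_mul_X_pow]
  exact Finset.sum_eq_zero fun j _ => by rw [if_neg (by omega), if_neg (by omega), add_zero]

theorem natDegree_trigPoly_le {n : ℕ} (c d : Fin n → ℝ) : (trigPoly c d).natDegree ≤ 2 * n :=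
  natDegree_sum_le_of_forall_le _ _ fun j _ => natDegree_add_le_of_degree_le
    ((natDegree_C_mul_X_pow_le _ _).trans (by omega))
    ((natDegree_C_mul_X_pow_le _ _).trans (by omega))

theorem ofReal_cos_add_sin (a b θ : ℝ) :
    ((a * Real.cos θ + b * Real.sin θ : ℝ) : ℂ) =
      (a - I * b) / 2 * exp (θ * I) + (a + I * b) / 2 * exp (-(θ * I)) := by
  rw [← neg_mul, exp_mul_I, exp_mul_I, cos_neg, sin_neg]
  push_cast
  linear_combination (b * Complex.sin θ) * I_sq

theorem ofReal_trigSum {n : ℕ} (c d : Fin n → ℝ) (x : ℝ) :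
    (trigSum c d x : ℂ) = exp (-(n * I) * x) * (trigPoly c d).eval (exp (x * I)) := by
  simp only [trigSum, trigPoly, ofReal_sum, eval_finsetSum, Finset.mul_sum]
  refine Finset.sum_congr rfl fun j _ => ?_
  have hj : (j : ℕ) + 1 ≤ n := j.isLt
  simp only [eval_add, eval_mul, eval_C, eval_pow, eval_X, ← exp_nat_mul, mul_add]
  have e₁ : exp (-(n * I) * x) * exp ((n + (j + 1) : ℕ) * (x * I)) =
      exp (((j + 1 : ℕ) * x : ℝ) * I) := by
    rw [← exp_add]; congr 1; push_cast; ring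
  have e₂ : exp (-(n * I) * x) * exp ((n - (j + 1) : ℕ) * (x * I)) =
      exp (-(((j + 1 : ℕ) * x : ℝ) * I)) := by
    rw [← exp_add]; congr 1; push_cast [Nat.cast_sub hj]; ring
  rw [mul_left_comm, e₁, mul_left_comm, e₂, ← ofReal_cos_add_sin]
  push_cast
  rfl

/-- The open half-plane bisected by the ray through `e^{iθ}`. -/
def halfPlane (θ : ℝ) : Set ℂ := {z | 0 < (z * exp (-(θ * I))).re}

theorem convex_halfPlane (θ : ℝ) : Convex ℝ (halfPlane θ) :=
  convex_halfSpace_gt ⟨fun z w => by simp [add_mul], fun c z => by simp [mul_assoc]⟩ 0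

theorem zero_notMem_halfPlane (θ : ℝ) : (0 : ℂ) ∉ halfPlane θ := by
  simp [halfPlane]

theorem exp_mul_I_mem_halfPlane {θ x : ℝ} (hx : |x - θ| < Real.pi / 2) :
    exp (x * I) ∈ halfPlane θ := by
  rw [halfPlane, Set.mem_ofPred_eq, ← exp_add, ← sub_eq_add_neg, ← sub_mul, ← ofReal_sub,
    exp_ofReal_mul_I_re]
  exact Real.cos_pos_of_mem_Ioo (abs_lt.mp hx)

theorem vanishAtMost_trigSum {n : ℕ} {c d : Fin n → ℝ} (hF : trigSum c d ≠ 0) {h : ℝ}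
    (h0 : 0 < h) (hπ : h < Real.pi) :
    VanishAtMost (trigSum c d) (2 * n) (2 * n - 1) (Set.Icc 0 h) := by
  intro r xs m hxs hinj _ _ hvan
  by_contra! hsum
  have hQ : trigPoly c d ≠ 0 := fun hQ =>
    hF (funext fun x => by simpa [hQ] using ofReal_trigSum c d x)
  set Q := trigPoly c d
  have hw : Function.Injective fun i => exp (xs i * I) := fun i j hij =>
    hinj (Circle.exp_injOn_Icc (by linarith [Real.pi_pos]) (hxs i) (hxs j)
      (Circle.ext (by simpa [Circle.coe_exp] using hij)))
  have hm : ∀ i, m i ≤ Q.rootMultiplicity (exp (xs i * I)) := fun i =>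
    le_rootMultiplicity_of_vanishAtLeast hQ (ofReal_trigSum c d) (hvan i)
  have hroots : Q.rootSet ℂ ⊆ halfPlane (h / 2) := by
    intro z hz
    obtain ⟨i, rfl⟩ := exists_eq_of_isRoot_of_natDegree_le_sum hQ hw hm
      ((natDegree_trigPoly_le c d).trans (by omega)) ((mem_rootSet'.mp hz).2)
    obtain ⟨hx₀, hxh⟩ := hxs i
    exact exp_mul_I_mem_halfPlane (abs_lt.mpr ⟨by linarith, by linarith⟩)
  have hdeg : n ≤ Q.natDegree := by
    have := sum_le_natDegree_of_le_rootMultiplicity hQ hw hm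
    omega
  exact coeff_ne_zero_of_rootSet_subset (convex_halfPlane _) (zero_notMem_halfPlane _) hQ
    hroots hdeg (coeff_trigPoly_self c d)

def sinSpan (N : ℕ) : Submodule ℝ (ℝ → ℝ) :=
  Submodule.span ℝ (Set.range fun j : Fin N => fun x => Real.sin (((j : ℕ) + 1 : ℝ) * x))

theorem sin_nat_mul_mem_sinSpan {N k : ℕ} (hk : k ≤ N) :
    (fun x => Real.sin (k * x)) ∈ sinSpan N := by
  rcases k with _ | k
  · convert (sinSpan N).zero_mem using 1
    simp [Pi.zero_def]
  · exact Submodule.subset_span ⟨⟨k, hk⟩, by simp⟩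

theorem sinSpan_le_succ (N : ℕ) : sinSpan N ≤ sinSpan (N + 1) :=
  Submodule.span_mono fun _ ⟨j, hj⟩ => ⟨j.castSucc, by simpa using hj⟩

theorem cos_mul_mem_sinSpan {N : ℕ} {f : ℝ → ℝ} (hf : f ∈ sinSpan N) :
    Real.cos * f ∈ sinSpan (N + 1) := by
  refine (Submodule.span_le.mpr (Set.range_subset_iff.mpr fun j => ?_) :
    sinSpan N ≤ (sinSpan (N + 1)).comap (LinearMap.mulLeft ℝ Real.cos)) hf
  have hprod : Real.cos * (fun x => Real.sin (((j : ℕ) + 1 : ℝ) * x)) =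
      (1 / 2 : ℝ) • (fun x => Real.sin (((j + 2 : ℕ) : ℝ) * x)) +
        (1 / 2 : ℝ) • (fun x => Real.sin ((j : ℕ) * x)) := by
    funext x
    have h₁ : ((j + 2 : ℕ) : ℝ) * x = ((j : ℕ) + 1) * x + x := by push_cast; ring
    have h₂ : ((j : ℕ) : ℝ) * x = ((j : ℕ) + 1) * x - x := by ring
    simp only [Pi.mul_apply, Pi.add_apply, Pi.smul_apply, smul_eq_mul, h₁, h₂, Real.sin_add,
      Real.sin_sub]
    ring
  rw [SetLike.mem_coe, Submodule.mem_comap, LinearMap.mulLeft_apply, hprod]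
  exact add_mem (Submodule.smul_mem _ _ (sin_nat_mul_mem_sinSpan (by omega)))
    (Submodule.smul_mem _ _ (sin_nat_mul_mem_sinSpan (by omega)))

theorem sin_half_mul_cos_half_pow_mem_sinSpan (k : ℕ) :
    (fun x => Real.sin (x / 2) * Real.cos (x / 2) ^ (2 * k + 1)) ∈ sinSpan (k + 1) := by
  induction k with
  | zero =>
    have h : (fun x => Real.sin (x / 2) * Real.cos (x / 2) ^ (2 * 0 + 1)) =
        (1 / 2 : ℝ) • fun x => Real.sin ((1 : ℕ) * x) := by
      funext x
      have := Real.sin_two_mul (x / 2)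
      simp only [Pi.smul_apply, smul_eq_mul, Nat.cast_one, one_mul,
        mul_div_cancel₀ x two_ne_zero] at this ⊢
      linarith
    rw [h]
    exact Submodule.smul_mem _ _ (sin_nat_mul_mem_sinSpan le_rfl)
  | succ k ih =>
    set g := fun x => Real.sin (x / 2) * Real.cos (x / 2) ^ (2 * k + 1)
    have h : (fun x => Real.sin (x / 2) * Real.cos (x / 2) ^ (2 * (k + 1) + 1)) =
        (1 / 2 : ℝ) • g + (1 / 2 : ℝ) • (Real.cos * g) := by
      funext x
      have hcos : Real.cos (x / 2) ^ 2 = 1 / 2 + Real.cos x / 2 := by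
        rw [Real.cos_sq, mul_div_cancel₀ _ two_ne_zero]
      simp only [g, Pi.add_apply, Pi.mul_apply, Pi.smul_apply, smul_eq_mul]
      rw [show 2 * (k + 1) + 1 = 2 * k + 1 + 2 by ring, pow_add, hcos]
      ring
    rw [h]
    exact add_mem (Submodule.smul_mem _ _ (sinSpan_le_succ _ ih))
      (Submodule.smul_mem _ _ (cos_mul_mem_sinSpan ih))

theorem exists_trigSum_eq_sin_half_mul_cos_half_pow (k : ℕ) :
    ∃ d : Fin (k + 1) → ℝ,
      trigSum 0 d = fun x => Real.sin (x / 2) * Real.cos (x / 2) ^ (2 * k + 1) := by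
  obtain ⟨d, hd⟩ :=
    (Submodule.mem_span_range_iff_exists_fun ℝ).mp (sin_half_mul_cos_half_pow_mem_sinSpan k)
  refine ⟨d, hd ▸ funext fun x => ?_⟩
  simp [trigSum, Finset.sum_apply]

theorem exists_trigSum_not_vanishAtMost (k : ℕ) :
    ∃ c d : Fin (k + 1) → ℝ, trigSum c d ≠ 0 ∧
      ¬ VanishAtMost (trigSum c d) (2 * (k + 1)) (2 * (k + 1) - 1) (Set.Icc 0 Real.pi) := by
  obtain ⟨d, hd⟩ := exists_trigSum_eq_sin_half_mul_cos_half_pow k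
  have hΦ : Differentiable ℂ fun z => Complex.sin (z / 2) * Complex.cos (z / 2) ^ (2 * k + 1) := by
    fun_prop
  have hF : ∀ x : ℝ, (trigSum 0 d x : ℂ) =
      Complex.sin (x / 2) * Complex.cos (x / 2) ^ (2 * k + 1) := fun x => by
    rw [hd]; push_cast; rfl
  have hvan₀ : VanishAtLeast (trigSum 0 d) 1 0 := by
    refine (vanishAtLeast_iff_le_analyticOrderAt hΦ hF 1 0).mpr ?_
    simpa [mul_comm] using le_analyticOrderAt_mul_pow
      (f := fun z => Complex.cos (z / 2) ^ (2 * k + 1)) (g := fun z => Complex.sin (z / 2))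
      (z₀ := 0) (by fun_prop) (by fun_prop) (by simp) 1
  have hvanπ : VanishAtLeast (trigSum 0 d) (2 * k + 1) Real.pi := by
    refine (vanishAtLeast_iff_le_analyticOrderAt hΦ hF _ _).mpr ?_
    exact le_analyticOrderAt_mul_pow (f := fun z => Complex.sin (z / 2))
      (g := fun z => Complex.cos (z / 2)) (by fun_prop) (by fun_prop) (by simp) _
  refine ⟨0, d, fun h => ?_, fun hV => ?_⟩
  · have hpos : 0 < trigSum 0 d (Real.pi / 2) := by
      rw [hd]
      exact mul_pos (Real.sin_pos_of_pos_of_lt_pi (by positivity) (by linarith [Real.pi_pos]))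
        (pow_pos (Real.cos_pos_of_mem_Ioo ⟨by linarith [Real.pi_pos], by linarith [Real.pi_pos]⟩) _)
    simp [h] at hpos
  · have := hV 2 ![0, Real.pi] ![1, 2 * k + 1]
      (fun i => by fin_cases i <;> simp [Real.pi_pos.le])
      (fun i j hij => by fin_cases i <;> fin_cases j <;> simp_all [Real.pi_ne_zero, eq_comm])
      (fun i => by fin_cases i <;> simp)
      (fun i => by fin_cases i <;> simp; omega)
      (fun i => by fin_cases i <;> simpa)
    simp [Fin.sum_univ_two] at this
    omega

/-- the `2n`-dimensional space spanned by
`cos x, sin x, cos 2x, sin 2x, …, cos nx, sin nx` has critical length `π`: for `0 < h < π`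
every nonzero element vanishes at most `2n - 1` times in `[0, h]` counting multiplicities up
to `2n`, and this fails on `[0, π]`. -/
theorem stmt15 (n : ℕ) (hn : 1 ≤ n) :
    (∀ c d : Fin n → ℝ,
      (fun x : ℝ => ∑ j : Fin n,
          (c j * Real.cos (((j : ℕ) + 1 : ℝ) * x) + d j * Real.sin (((j : ℕ) + 1 : ℝ) * x)))
        ≠ 0 →
      ∀ h : ℝ, 0 < h → h < Real.pi →
        VanishAtMost
          (fun x : ℝ => ∑ j : Fin n,
            (c j * Real.cos (((j : ℕ) + 1 : ℝ) * x) + d j * Real.sin (((j : ℕ) + 1 : ℝ) * x)))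
          (2 * n) (2 * n - 1) (Set.Icc 0 h)) ∧
    ∃ c d : Fin n → ℝ,
      (fun x : ℝ => ∑ j : Fin n,
          (c j * Real.cos (((j : ℕ) + 1 : ℝ) * x) + d j * Real.sin (((j : ℕ) + 1 : ℝ) * x)))
        ≠ 0 ∧
      ¬ VanishAtMost
          (fun x : ℝ => ∑ j : Fin n,
            (c j * Real.cos (((j : ℕ) + 1 : ℝ) * x) + d j * Real.sin (((j : ℕ) + 1 : ℝ) * x)))
          (2 * n) (2 * n - 1) (Set.Icc 0 Real.pi) := by
  obtain ⟨k, rfl⟩ : ∃ k, n = k + 1 := ⟨n - 1, by omega⟩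
  exact ⟨fun c d hF h h0 hπ => vanishAtMost_trigSum hF h0 hπ, exists_trigSum_not_vanishAtMost k⟩
end
end
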